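/- In the Moore collection C of cut-free-closed sets of bunches: if Y is closed then X —• Y = {Δ | ∀Δ' ∈ X, (Δ , Δ') ∈ Y} is closed; in fact, writing Y = ⋂ⱼ ⟦φⱼ⟧, one has X —• Y = ⋂ over (Δ', j) ∈ X × J of ⟦⟨Δ'⟩ -* φⱼ⟧. -/

import Mathlib

/-- Formulas of BI. -/
inductive Frml : Type
  | atom : Nat → Frml
  | top : Frml
  | bot : Frml
  | emp : Frml
  | and : Frml → Frml → Frml
  | or : Frml → Frml → Frml
  | imp : Frml → Frml → Frml
  | sep : Frml → Frml → Frml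
  | wand : Frml → Frml → Frml

/-- Bunches: trees with formula leaves, multiplicative/additive units and nodes. -/
inductive Bunch : Type
  | frml : Frml → Bunch
  | mempty : Bunch    -- ∅ₘ
  | aempty : Bunch    -- ∅ₐ
  | comma : Bunch → Bunch → Bunch   -- multiplicative ','
  | semic : Bunch → Bunch → Bunch   -- additive ';'

/-- Bunched contexts: bunches with a single hole. -/
inductive BCtx : Type
  | hole : BCtx
  | commaL : BCtx → Bunch → BCtx
  | commaR : Bunch → BCtx → BCtx
  | semicL : BCtx → Bunch → BCtx
  | semicR : Bunch → BCtx → BCtx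

/-- Filling the hole of a bunched context with a bunch. -/
def BCtx.fill : BCtx → Bunch → Bunch
  | .hole, Δ => Δ
  | .commaL C Γ, Δ => .comma (C.fill Δ) Γ
  | .commaR Γ C, Δ => .comma Γ (C.fill Δ)
  | .semicL C Γ, Δ => .semic (C.fill Δ) Γ
  | .semicR Γ C, Δ => .semic Γ (C.fill Δ)

/-- Equivalence of bunches: commutative-monoid laws for (',', ∅ₘ) and (';', ∅ₐ),
under arbitrary bunched contexts. -/
inductive BEquiv : Bunch → Bunch → Prop
  | refl (Δ : Bunch) : BEquiv Δ Δ
  | symm {Δ Δ' : Bunch} : BEquiv Δ Δ' → BEquiv Δ' Δ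
  | trans {Δ₁ Δ₂ Δ₃ : Bunch} : BEquiv Δ₁ Δ₂ → BEquiv Δ₂ Δ₃ → BEquiv Δ₁ Δ₃
  | commaComm (Δ₁ Δ₂ : Bunch) : BEquiv (.comma Δ₁ Δ₂) (.comma Δ₂ Δ₁)
  | semicComm (Δ₁ Δ₂ : Bunch) : BEquiv (.semic Δ₁ Δ₂) (.semic Δ₂ Δ₁)
  | commaAssoc (Δ₁ Δ₂ Δ₃ : Bunch) :
      BEquiv (.comma Δ₁ (.comma Δ₂ Δ₃)) (.comma (.comma Δ₁ Δ₂) Δ₃)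
  | semicAssoc (Δ₁ Δ₂ Δ₃ : Bunch) :
      BEquiv (.semic Δ₁ (.semic Δ₂ Δ₃)) (.semic (.semic Δ₁ Δ₂) Δ₃)
  | commaUnit (Δ : Bunch) : BEquiv (.comma Δ .mempty) Δ
  | semicUnit (Δ : Bunch) : BEquiv (.semic Δ .aempty) Δ
  | ctx (C : BCtx) {Δ Δ' : Bunch} : BEquiv Δ Δ' → BEquiv (C.fill Δ) (C.fill Δ')

/-- Cut-free sequent calculus for BI, with the axiom rule restricted to atoms. -/
inductive Proves : Bunch → Frml → Prop
  | ax (a : Nat) : Proves (.frml (.atom a)) (.atom a)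
  | equiv {Δ Δ' : Bunch} {φ : Frml} :
      Proves Δ' φ → BEquiv Δ Δ' → Proves Δ φ
  | weaken (C : BCtx) {Δ₁ Δ₂ : Bunch} {φ : Frml} :
      Proves (C.fill Δ₁) φ → Proves (C.fill (.semic Δ₁ Δ₂)) φ
  | contract (C : BCtx) {Δ₁ : Bunch} {φ : Frml} :
      Proves (C.fill (.semic Δ₁ Δ₁)) φ → Proves (C.fill Δ₁) φ
  | empR : Proves .mempty .emp
  | empL (C : BCtx) {φ : Frml} :
      Proves (C.fill .mempty) φ → Proves (C.fill (.frml .emp)) φ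
  | sepR {Δ₁ Δ₂ : Bunch} {φ ψ : Frml} :
      Proves Δ₁ φ → Proves Δ₂ ψ → Proves (.comma Δ₁ Δ₂) (.sep φ ψ)
  | sepL (C : BCtx) {φ ψ χ : Frml} :
      Proves (C.fill (.comma (.frml φ) (.frml ψ))) χ →
      Proves (C.fill (.frml (.sep φ ψ))) χ
  | wandR {Δ : Bunch} {φ ψ : Frml} :
      Proves (.comma Δ (.frml φ)) ψ → Proves Δ (.wand φ ψ)
  | wandL (C : BCtx) {Δ₁ Δ₂ : Bunch} {φ ψ χ : Frml} :
      Proves Δ₁ φ → Proves (C.fill (.comma Δ₂ (.frml ψ))) χ →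
      Proves (C.fill (.comma (.comma Δ₁ Δ₂) (.frml (.wand φ ψ)))) χ
  | topR : Proves .aempty .top
  | topL (C : BCtx) {φ : Frml} :
      Proves (C.fill .aempty) φ → Proves (C.fill (.frml .top)) φ
  | andR {Δ₁ Δ₂ : Bunch} {φ ψ : Frml} :
      Proves Δ₁ φ → Proves Δ₂ ψ → Proves (.semic Δ₁ Δ₂) (.and φ ψ)
  | andL (C : BCtx) {φ ψ χ : Frml} :
      Proves (C.fill (.semic (.frml φ) (.frml ψ))) χ →
      Proves (C.fill (.frml (.and φ ψ))) χ
  | impR {Δ : Bunch} {φ ψ : Frml} :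
      Proves (.semic Δ (.frml φ)) ψ → Proves Δ (.imp φ ψ)
  | impL (C : BCtx) {Δ₁ Δ₂ : Bunch} {φ ψ χ : Frml} :
      Proves Δ₁ φ → Proves (C.fill (.semic Δ₂ (.frml ψ))) χ →
      Proves (C.fill (.semic (.semic Δ₁ Δ₂) (.frml (.imp φ ψ)))) χ
  | botL (C : BCtx) {φ : Frml} : Proves (C.fill (.frml .bot)) φ
  | orR1 {Δ : Bunch} {φ ψ : Frml} : Proves Δ φ → Proves Δ (.or φ ψ)
  | orR2 {Δ : Bunch} {φ ψ : Frml} : Proves Δ ψ → Proves Δ (.or φ ψ)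
  | orL (C : BCtx) {φ ψ χ : Frml} :
      Proves (C.fill (.frml φ)) χ → Proves (C.fill (.frml ψ)) χ →
      Proves (C.fill (.frml (.or φ ψ))) χ

/-- The formula collapse `⟨Δ⟩` of a bunch. -/
def Bunch.collapse : Bunch → Frml
  | .frml φ => φ
  | .mempty => .emp
  | .aempty => .top
  | .comma Δ₁ Δ₂ => .sep Δ₁.collapse Δ₂.collapse
  | .semic Δ₁ Δ₂ => .and Δ₁.collapse Δ₂.collapse

/-- The principal closed set `⟦φ⟧ = {Δ | Δ ⊢cf φ}`. -/
def pr (φ : Frml) : Set Bunch := {Δ | Proves Δ φ}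

/-- The Moore closure generated by the principal sets:
`cl X = ⋂ {⟦φ⟧ | X ⊆ ⟦φ⟧}`. -/
def clB (X : Set Bunch) : Set Bunch := ⋂₀ {Y | ∃ φ : Frml, Y = pr φ ∧ X ⊆ Y}

/-- A set of bunches is closed if it is a fixpoint of the closure operator. -/
def ClosedB (X : Set Bunch) : Prop := clB X = X

/-- `X —• Y` on sets of bunches. -/
def wandSet (X Y : Set Bunch) : Set Bunch :=
  {Δ | ∀ Δ' ∈ X, Bunch.comma Δ Δ' ∈ Y}

/-!
By (-*R) and its invertibility, `Δ ⊢ ⟨Δ'⟩ -* ψ` iff `Δ, ⟨Δ'⟩ ⊢ ψ`, and a bunch may be traded for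
its collapse in either direction: towards the collapse by the left rules for `emp`, `⊤`, `*`, `∧`,
back by the admissible collapse rule. Hence `X —• ⋂ⱼ ⟦φⱼ⟧ = ⋂ ⟦⟨Δ'⟩ -* φⱼ⟧`, an intersection of
principal sets, and every closed `Y` is such an intersection.

The collapse rule is proved one connective at a time. To unfold one leaf `θ` into the bunch its
left rule would produce, unfold every leaf `θ` of the derivation simultaneously: this commutes with
all rules without tracking where the hole goes, and the unwanted unfoldings are then folded back
by the left rules.
-/

deriving instance DecidableEq for Frml

def BCtx.comp : BCtx → BCtx → BCtx
  | .hole, D => D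
  | .commaL C Γ, D => .commaL (C.comp D) Γ
  | .commaR Γ C, D => .commaR Γ (C.comp D)
  | .semicL C Γ, D => .semicL (C.comp D) Γ
  | .semicR Γ C, D => .semicR Γ (C.comp D)

@[simp]
theorem BCtx.fill_comp (C D : BCtx) (Δ : Bunch) : (C.comp D).fill Δ = C.fill (D.fill Δ) := by
  induction C <;> simp [BCtx.comp, BCtx.fill, *]

namespace Bunch

def ReplaceableBy (Δ Γ : Bunch) : Prop :=
  ∀ (C : BCtx) (χ : Frml), Proves (C.fill Δ) χ → Proves (C.fill Γ) χ

namespace ReplaceableBy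

theorem refl (Δ : Bunch) : Δ.ReplaceableBy Δ := fun _ _ h => h

theorem trans {Δ₁ Δ₂ Δ₃ : Bunch} (h₁₂ : Δ₁.ReplaceableBy Δ₂) (h₂₃ : Δ₂.ReplaceableBy Δ₃) :
    Δ₁.ReplaceableBy Δ₃ :=
  fun C χ h => h₂₃ C χ (h₁₂ C χ h)

theorem fill {Δ Γ : Bunch} (h : Δ.ReplaceableBy Γ) (C : BCtx) :
    (C.fill Δ).ReplaceableBy (C.fill Γ) := by
  intro D χ hD
  simpa using h (D.comp C) χ (by simpa using hD)

theorem comma {Δ₁ Δ₂ Γ₁ Γ₂ : Bunch} (h₁ : Δ₁.ReplaceableBy Γ₁) (h₂ : Δ₂.ReplaceableBy Γ₂) :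
    (comma Δ₁ Δ₂).ReplaceableBy (comma Γ₁ Γ₂) :=
  (h₁.fill (.commaL .hole Δ₂)).trans (h₂.fill (.commaR Γ₁ .hole))

theorem semic {Δ₁ Δ₂ Γ₁ Γ₂ : Bunch} (h₁ : Δ₁.ReplaceableBy Γ₁) (h₂ : Δ₂.ReplaceableBy Γ₂) :
    (semic Δ₁ Δ₂).ReplaceableBy (semic Γ₁ Γ₂) :=
  (h₁.fill (.semicL .hole Δ₂)).trans (h₂.fill (.semicR Γ₁ .hole))

end ReplaceableBy

theorem replaceableBy_frml_collapse (Δ : Bunch) : Δ.ReplaceableBy (frml Δ.collapse) := by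
  induction Δ with
  | frml φ => exact .refl _
  | mempty => exact fun C _ => .empL C
  | aempty => exact fun C _ => .topL C
  | comma Δ₁ Δ₂ ih₁ ih₂ => exact (ih₁.comma ih₂).trans fun C _ => .sepL C
  | semic Δ₁ Δ₂ ih₁ ih₂ => exact (ih₁.semic ih₂).trans fun C _ => .andL C

end Bunch

/-- The bunch that the invertible left rule for the main connective of `θ` puts in place of `θ`
(`θ` itself when there is no such rule). -/
def Frml.unfold : Frml → Bunch
  | .emp => .mempty
  | .top => .aempty
  | .sep φ ψ => .comma (.frml φ) (.frml ψ)
  | .and φ ψ => .semic (.frml φ) (.frml ψ)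
  | θ => .frml θ

@[simp]
theorem Frml.collapse_unfold (θ : Frml) : θ.unfold.collapse = θ := by
  cases θ <;> rfl

def Bunch.unfoldAt (θ : Frml) : Bunch → Bunch
  | .frml φ => if φ = θ then θ.unfold else .frml φ
  | .mempty => .mempty
  | .aempty => .aempty
  | .comma Δ₁ Δ₂ => .comma (Δ₁.unfoldAt θ) (Δ₂.unfoldAt θ)
  | .semic Δ₁ Δ₂ => .semic (Δ₁.unfoldAt θ) (Δ₂.unfoldAt θ)

def BCtx.unfoldAt (θ : Frml) : BCtx → BCtx
  | .hole => .hole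
  | .commaL C Γ => .commaL (C.unfoldAt θ) (Γ.unfoldAt θ)
  | .commaR Γ C => .commaR (Γ.unfoldAt θ) (C.unfoldAt θ)
  | .semicL C Γ => .semicL (C.unfoldAt θ) (Γ.unfoldAt θ)
  | .semicR Γ C => .semicR (Γ.unfoldAt θ) (C.unfoldAt θ)

theorem BCtx.unfoldAt_fill (θ : Frml) (C : BCtx) (Δ : Bunch) :
    (C.fill Δ).unfoldAt θ = (C.unfoldAt θ).fill (Δ.unfoldAt θ) := by
  induction C <;> simp [BCtx.fill, BCtx.unfoldAt, Bunch.unfoldAt, *]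

theorem Bunch.unfoldAt_frml (θ φ : Frml) :
    (frml φ).unfoldAt θ = if φ = θ then φ.unfold else frml φ := by
  by_cases h : φ = θ <;> simp [unfoldAt, h]

theorem BEquiv.unfoldAt (θ : Frml) {Δ Δ' : Bunch} (h : BEquiv Δ Δ') :
    BEquiv (Δ.unfoldAt θ) (Δ'.unfoldAt θ) := by
  induction h with
  | refl => exact .refl _
  | symm _ ih => exact ih.symm
  | trans _ _ ih₁ ih₂ => exact ih₁.trans ih₂
  | commaComm => exact .commaComm _ _
  | semicComm => exact .semicComm _ _
  | commaAssoc => exact .commaAssoc _ _ _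
  | semicAssoc => exact .semicAssoc _ _ _
  | commaUnit => exact .commaUnit _
  | semicUnit => exact .semicUnit _
  | ctx C _ ih => rw [BCtx.unfoldAt_fill, BCtx.unfoldAt_fill]; exact .ctx _ ih

theorem Bunch.unfoldAt_replaceableBy (θ : Frml) (Δ : Bunch) : (Δ.unfoldAt θ).ReplaceableBy Δ := by
  induction Δ with
  | frml φ =>
    rw [unfoldAt_frml]
    split_ifs with h
    · simpa using replaceableBy_frml_collapse φ.unfold
    · exact .refl _
  | mempty | aempty => exact .refl _
  | comma Δ₁ Δ₂ ih₁ ih₂ => exact ih₁.comma ih₂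
  | semic Δ₁ Δ₂ ih₁ ih₂ => exact ih₁.semic ih₂

theorem BCtx.unfoldAt_fill_replaceableBy (θ : Frml) (C : BCtx) (Δ : Bunch) :
    ((C.unfoldAt θ).fill Δ).ReplaceableBy (C.fill Δ) := by
  induction C with
  | hole => exact .refl _
  | commaL C Γ ih => exact ih.comma (Γ.unfoldAt_replaceableBy θ)
  | commaR Γ C ih => exact (Γ.unfoldAt_replaceableBy θ).comma ih
  | semicL C Γ ih => exact ih.semic (Γ.unfoldAt_replaceableBy θ)
  | semicR Γ C ih => exact (Γ.unfoldAt_replaceableBy θ).semic ih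

theorem Bunch.unfoldAt_frml_of_unfold_eq {θ φ : Frml} (h : φ.unfold = .frml φ) :
    (Bunch.frml φ).unfoldAt θ = .frml φ := by
  simp [Bunch.unfoldAt_frml, h]

theorem Proves.fill_unfoldAt_frml (θ : Frml) {C : BCtx} {φ χ : Frml}
    (h : Proves (C.fill φ.unfold) χ) (hL : Proves (C.fill φ.unfold) χ → Proves (C.fill (.frml φ)) χ) :
    Proves (C.fill ((Bunch.frml φ).unfoldAt θ)) χ := by
  rw [Bunch.unfoldAt_frml]
  split_ifs
  exacts [h, hL h]

theorem Proves.unfoldAt (θ : Frml) {Δ : Bunch} {χ : Frml} (h : Proves Δ χ) :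
    Proves (Δ.unfoldAt θ) χ := by
  have refold := Bunch.unfoldAt_replaceableBy θ
  induction h with
  | ax a => rw [Bunch.unfoldAt_frml_of_unfold_eq rfl]; exact .ax a
  | equiv _ he ih => exact .equiv ih (he.unfoldAt θ)
  | weaken C _ ih => rw [BCtx.unfoldAt_fill] at ih ⊢; exact .weaken _ ih
  | contract C _ ih => rw [BCtx.unfoldAt_fill] at ih ⊢; exact .contract _ ih
  | empR => exact .empR
  | empL C _ ih => rw [BCtx.unfoldAt_fill] at ih ⊢; exact .fill_unfoldAt_frml θ ih (.empL _)
  | sepR _ _ ih₁ ih₂ => exact .sepR ih₁ ih₂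
  | sepL C _ ih =>
    rw [BCtx.unfoldAt_fill] at ih ⊢
    exact .fill_unfoldAt_frml θ (refold _ _ _ ih) (.sepL _)
  | @wandR Δ φ ψ _ ih => exact .wandR (refold (.frml φ) (.commaR _ .hole) ψ ih)
  | @wandL C Δ₁ Δ₂ φ ψ χ _ _ ih₁ ih₂ =>
    rw [BCtx.unfoldAt_fill] at ih₂ ⊢
    rw [Bunch.unfoldAt, Bunch.unfoldAt_frml_of_unfold_eq rfl]
    exact .wandL _ ih₁ ((Bunch.ReplaceableBy.refl _).comma (refold (.frml ψ)) _ _ ih₂)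
  | topR => exact .topR
  | topL C _ ih => rw [BCtx.unfoldAt_fill] at ih ⊢; exact .fill_unfoldAt_frml θ ih (.topL _)
  | andR _ _ ih₁ ih₂ => exact .andR ih₁ ih₂
  | andL C _ ih =>
    rw [BCtx.unfoldAt_fill] at ih ⊢
    exact .fill_unfoldAt_frml θ (refold _ _ _ ih) (.andL _)
  | @impR Δ φ ψ _ ih => exact .impR (refold (.frml φ) (.semicR _ .hole) ψ ih)
  | @impL C Δ₁ Δ₂ φ ψ χ _ _ ih₁ ih₂ =>
    rw [BCtx.unfoldAt_fill] at ih₂ ⊢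
    rw [Bunch.unfoldAt, Bunch.unfoldAt_frml_of_unfold_eq rfl]
    exact .impL _ ih₁ ((Bunch.ReplaceableBy.refl _).semic (refold (.frml ψ)) _ _ ih₂)
  | botL C => rw [BCtx.unfoldAt_fill, Bunch.unfoldAt_frml_of_unfold_eq rfl]; exact .botL _
  | orR1 _ ih => exact .orR1 ih
  | orR2 _ ih => exact .orR2 ih
  | @orL C φ ψ χ _ _ ih₁ ih₂ =>
    rw [BCtx.unfoldAt_fill] at ih₁ ih₂ ⊢
    rw [Bunch.unfoldAt_frml_of_unfold_eq rfl]
    exact .orL _ (refold _ _ _ ih₁) (refold _ _ _ ih₂)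

theorem Frml.replaceableBy_unfold (θ : Frml) : (Bunch.frml θ).ReplaceableBy θ.unfold := by
  intro C χ h
  have h' := h.unfoldAt θ
  rw [BCtx.unfoldAt_fill, Bunch.unfoldAt_frml, if_pos rfl] at h'
  exact BCtx.unfoldAt_fill_replaceableBy θ C θ.unfold .hole χ h'

theorem Bunch.frml_collapse_replaceableBy (Δ : Bunch) : (frml Δ.collapse).ReplaceableBy Δ := by
  induction Δ with
  | frml φ => exact .refl _
  | mempty => exact Frml.emp.replaceableBy_unfold
  | aempty => exact Frml.top.replaceableBy_unfold
  | comma Δ₁ Δ₂ ih₁ ih₂ => exact (Frml.replaceableBy_unfold _).trans (ih₁.comma ih₂)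
  | semic Δ₁ Δ₂ ih₁ ih₂ => exact (Frml.replaceableBy_unfold _).trans (ih₁.semic ih₂)

theorem Proves.of_wand {Δ : Bunch} {φ ψ : Frml} (h : Proves Δ (.wand φ ψ)) :
    Proves (.comma Δ (.frml φ)) ψ := by
  generalize hχ : Frml.wand φ ψ = χ at h
  induction h with
  | ax | empR | sepR | topR | andR | impR | orR1 | orR2 => cases hχ
  | wandR h => cases hχ; exact h
  | equiv _ he ih => exact .equiv (ih hχ) (.ctx (.commaL .hole _) he)
  | weaken C _ ih => exact .weaken (.commaL C _) (ih hχ)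
  | contract C _ ih => exact .contract (.commaL C _) (ih hχ)
  | empL C _ ih => exact .empL (.commaL C _) (ih hχ)
  | sepL C _ ih => exact .sepL (.commaL C _) (ih hχ)
  | wandL C h₁ _ _ ih₂ => exact .wandL (.commaL C _) h₁ (ih₂ hχ)
  | topL C _ ih => exact .topL (.commaL C _) (ih hχ)
  | andL C _ ih => exact .andL (.commaL C _) (ih hχ)
  | impL C h₁ _ _ ih₂ => exact .impL (.commaL C _) h₁ (ih₂ hχ)
  | botL C => exact .botL (.commaL C _)
  | orL C _ _ ih₁ ih₂ => exact .orL (.commaL C _) (ih₁ hχ) (ih₂ hχ)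

theorem proves_wand_collapse_iff (Δ Δ' : Bunch) (ψ : Frml) :
    Proves Δ (.wand Δ'.collapse ψ) ↔ Proves (.comma Δ Δ') ψ :=
  ⟨fun h => Δ'.frml_collapse_replaceableBy (.commaR Δ .hole) ψ h.of_wand,
    fun h => .wandR (Δ'.replaceableBy_frml_collapse (.commaR Δ .hole) ψ h)⟩

theorem wandSet_eq_iInter_pr (X : Set Bunch) {Y : Set Bunch} {ι : Sort*} {φ : ι → Frml}
    (hY : Y = ⋂ j, pr (φ j)) :
    wandSet X Y = ⋂ (Δ' : X) (j : ι), pr (.wand (Bunch.collapse Δ'.1) (φ j)) := by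
  ext Δ
  simp [wandSet, hY, pr, proves_wand_collapse_iff]

theorem clB_mono {S T : Set Bunch} (h : S ⊆ T) : clB S ⊆ clB T :=
  Set.sInter_subset_sInter fun _ ⟨φ, hφ, hT⟩ => ⟨φ, hφ, h.trans hT⟩

theorem subset_clB (S : Set Bunch) : S ⊆ clB S :=
  Set.subset_sInter fun _ ⟨_, _, hS⟩ => hS

theorem closedB_pr (φ : Frml) : ClosedB (pr φ) :=
  (Set.sInter_subset_of_mem ⟨φ, rfl, subset_rfl⟩ : clB (pr φ) ⊆ pr φ).antisymm (subset_clB _)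

theorem closedB_iInter {ι : Sort*} {S : ι → Set Bunch} (hS : ∀ i, ClosedB (S i)) :
    ClosedB (⋂ i, S i) :=
  (Set.subset_iInter fun i => (clB_mono (Set.iInter_subset S i)).trans (hS i).le).antisymm
    (subset_clB _)

theorem ClosedB.eq_iInter_pr {Y : Set Bunch} (hY : ClosedB Y) :
    Y = ⋂ ψ : {ψ : Frml // Y ⊆ pr ψ}, pr ψ.1 := by
  conv_lhs => rw [← hY]
  ext Δ
  simp [clB]

/-- if `Y` is closed then `X —• Y` is closed; moreover, writing
`Y = ⋂ⱼ ⟦φⱼ⟧`, one has `X —• Y = ⋂_{(Δ',j)} ⟦⟨Δ'⟩ -* φⱼ⟧`. -/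
theorem wand_is_closed (X Y : Set Bunch) (hY : ClosedB Y) :
    ClosedB (wandSet X Y) ∧
    ∀ (J : Type) (φ : J → Frml), Y = ⋂ j : J, pr (φ j) →
      wandSet X Y = ⋂ (Δ' : X) (j : J), pr (.wand (Bunch.collapse Δ'.1) (φ j)) := by
  refine ⟨?_, fun J φ hY' => wandSet_eq_iInter_pr X hY'⟩
  rw [wandSet_eq_iInter_pr X hY.eq_iInter_pr]
  exact closedB_iInter fun _ => closedB_iInter fun _ => closedB_pr _
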